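/- arXiv:1310.7402 — 5 statements merged into one kernel-verified Lean document; each statement's English description precedes it below -/
import Mathlib

section
/- Let (u_n)_{n≥1} be a bounded sequence satisfying u_n = a_n u_{n+1} + b_n with a_n ≥ 0, limsup a_n < 1, b_n > 0, sup_{k,n≥1} b_{n+k}/b_n < ∞, and a_n → 0 as n → ∞. Then u_n / b_n → 1 as n → ∞. -/
/-!
Once `|a n| ≤ 1/2`, iterating `|u n| ≤ |b n| + |a n| |u (n+1)|` gives
`|u n| ≤ ∑_{j<m} 2^{-j} |b (n+j)| + 2^{-m} M ≤ 2 K |b n| + 2^{-m} M`, so `u = O(b)`.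
Then `u n / b n - 1 = a n * u (n+1) / b n` is `o(1)`, because `a → 0` and
`u (n+1) = O(b (n+1)) = O(b n)`.
-/

open Filter Finset Asymptotics Topology

section BackwardRecursion

variable {v c : ℕ → ℝ} {δ : ℝ} {n : ℕ}

lemma le_sum_add_pow_mul_of_le_add_mul (hδ : 0 ≤ δ)
    (hv : ∀ k ≥ n, v k ≤ c k + δ * v (k + 1)) (m : ℕ) :
    v n ≤ ∑ j ∈ range m, δ ^ j * c (n + j) + δ ^ m * v (n + m) := by
  induction m with
  | zero => simp
  | succ m ih =>
    have step := mul_le_mul_of_nonneg_left (hv (n + m) (Nat.le_add_right n m)) (pow_nonneg hδ m)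
    rw [sum_range_succ, pow_succ, ← add_assoc]
    linarith

lemma le_mul_div_one_sub_of_le_add_mul {K M : ℝ} (hδ₀ : 0 ≤ δ) (hδ₁ : δ < 1)
    (hv : ∀ k ≥ n, v k ≤ c k + δ * v (k + 1)) (hM : ∀ k ≥ n, v k ≤ M)
    (hc : ∀ j, c (n + j) ≤ K * c n) (hc₀ : 0 ≤ c n) :
    v n ≤ K * c n / (1 - δ) := by
  have hKc : 0 ≤ K * c n := hc₀.trans (by simpa using hc 0)
  have hgeom (m : ℕ) : ∑ j ∈ range m, δ ^ j ≤ 1 / (1 - δ) := by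
    rw [range_eq_Ico]
    simpa using geom_sum_Ico_le_of_lt_one (m := 0) (n := m) hδ₀ hδ₁
  have hbound (m : ℕ) : v n ≤ K * c n / (1 - δ) + δ ^ m * M :=
    calc v n ≤ ∑ j ∈ range m, δ ^ j * c (n + j) + δ ^ m * v (n + m) :=
          le_sum_add_pow_mul_of_le_add_mul hδ₀ hv m
      _ ≤ ∑ j ∈ range m, δ ^ j * (K * c n) + δ ^ m * M := by
          gcongr with j
          · exact hc j
          · exact hM _ (Nat.le_add_right n m)
      _ = K * c n * ∑ j ∈ range m, δ ^ j + δ ^ m * M := by rw [← sum_mul, mul_comm]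
      _ ≤ K * c n * (1 / (1 - δ)) + δ ^ m * M := by gcongr; exact hgeom m
      _ = K * c n / (1 - δ) + δ ^ m * M := by rw [mul_one_div]
  have hlim : Tendsto (fun m => K * c n / (1 - δ) + δ ^ m * M) atTop (𝓝 (K * c n / (1 - δ))) := by
    simpa using tendsto_const_nhds.add ((tendsto_pow_atTop_nhds_zero_of_lt_one hδ₀ hδ₁).mul_const M)
  exact ge_of_tendsto' hlim hbound

end BackwardRecursion

theorem isBigO_of_eq_mul_succ_add {u a b : ℕ → ℝ} {δ K M : ℝ}
    (hu : ∀ᶠ n in atTop, |u n| ≤ M) (hrec : ∀ᶠ n in atTop, u n = a n * u (n + 1) + b n)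
    (ha : ∀ᶠ n in atTop, |a n| ≤ δ) (hδ : δ < 1)
    (hb : ∀ᶠ n in atTop, ∀ j, |b (n + j)| ≤ K * |b n|) :
    u =O[atTop] b := by
  obtain ⟨N, hN⟩ := eventually_atTop.1 (hu.and (hrec.and ha))
  have hδ₀ : 0 ≤ δ := (abs_nonneg _).trans (hN N le_rfl).2.2
  have hstep : ∀ k ≥ N, |u k| ≤ |b k| + δ * |u (k + 1)| := fun k hk => by
    obtain ⟨-, hrec, ha⟩ := hN k hk
    calc |u k| ≤ |a k| * |u (k + 1)| + |b k| := by rw [hrec, ← abs_mul]; exact abs_add_le _ _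
      _ ≤ δ * |u (k + 1)| + |b k| := by gcongr
      _ = |b k| + δ * |u (k + 1)| := add_comm _ _
  refine IsBigO.of_bound (K / (1 - δ)) ?_
  filter_upwards [eventually_ge_atTop N, hb] with n hn hbn
  rw [Real.norm_eq_abs, Real.norm_eq_abs, ← mul_div_right_comm]
  exact le_mul_div_one_sub_of_le_add_mul hδ₀ hδ (fun k hk => hstep k (hn.trans hk))
    (fun k hk => (hN k (hn.trans hk)).1) hbn (abs_nonneg _)

lemma le_max_one_mul_of_div_le {b : ℕ → ℝ} {K : ℝ} {n : ℕ} (hbn : 0 < b n)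
    (hK : ∀ k ≥ 1, b (n + k) / b n ≤ K) (j : ℕ) :
    b (n + j) ≤ max K 1 * b n := by
  rcases j.eq_zero_or_pos with rfl | hj
  · simpa using le_mul_of_one_le_left hbn.le (le_max_right K 1)
  · calc b (n + j) ≤ K * b n := (div_le_iff₀ hbn).1 (hK j hj)
      _ ≤ max K 1 * b n := by gcongr; exact le_max_left K 1

theorem affine_recursion_equiv_general
    (u a b : ℕ → ℝ)
    (hbdd : ∃ M : ℝ, ∀ n ≥ 1, |u n| ≤ M)
    (hrec : ∀ n ≥ 1, u n = a n * u (n + 1) + b n)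
    (hb_pos : ∀ n ≥ 1, 0 < b n)
    (hb_ratio : ∃ K : ℝ, ∀ n ≥ 1, ∀ k ≥ 1, b (n + k) / b n ≤ K)
    (ha_lim : Tendsto a atTop (nhds 0)) :
    Tendsto (fun n => u n / b n) atTop (nhds 1) := by
  obtain ⟨M, hM⟩ := hbdd
  obtain ⟨K, hK⟩ := hb_ratio
  have hb_grow : ∀ᶠ n in atTop, ∀ j, |b (n + j)| ≤ max K 1 * |b n| :=
    eventually_atTop.2 ⟨1, fun n hn j => by
      rw [abs_of_pos (hb_pos n hn), abs_of_pos (hb_pos (n + j) (by omega))]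
      exact le_max_one_mul_of_div_le (hb_pos n hn) (hK n hn) j⟩
  have ha_small : ∀ᶠ n in atTop, |a n| ≤ 1 / 2 :=
    ((tendsto_zero_iff_abs_tendsto_zero a).1 ha_lim).eventually (eventually_le_nhds (by norm_num))
  have hO : u =O[atTop] b := isBigO_of_eq_mul_succ_add (eventually_atTop.2 ⟨1, hM⟩)
    (eventually_atTop.2 ⟨1, hrec⟩) ha_small (by norm_num) hb_grow
  have hb_succ : (fun n => b (n + 1)) =O[atTop] b := IsBigO.of_bound _ (hb_grow.mono fun n h => h 1)
  have hlo : (fun n => a n * u (n + 1)) =o[atTop] b := by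
    simpa using ((isLittleO_one_iff ℝ).2 ha_lim).mul_isBigO
      ((hO.comp_tendsto (tendsto_add_atTop_nat 1)).trans hb_succ)
  have hlim : Tendsto (fun n => 1 + a n * u (n + 1) / b n) atTop (𝓝 1) := by
    simpa using tendsto_const_nhds.add hlo.tendsto_div_nhds_zero
  refine hlim.congr' (eventually_atTop.2 ⟨1, fun n hn => ?_⟩)
  show _ = u n / b n
  rw [hrec n hn, add_div, div_self (hb_pos n hn).ne', add_comm]

theorem affine_recursion_equiv
    (u a b : ℕ → ℝ)
    (hbdd : ∃ M : ℝ, ∀ n ≥ 1, |u n| ≤ M)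
    (hrec : ∀ n ≥ 1, u n = a n * u (n + 1) + b n)
    (ha_nonneg : ∀ n ≥ 1, 0 ≤ a n)
    (ha_limsup : limsup (fun n => a n) atTop < 1)
    (hb_pos : ∀ n ≥ 1, 0 < b n)
    (hb_ratio : ∃ K : ℝ, ∀ n ≥ 1, ∀ k ≥ 1, b (n + k) / b n ≤ K)
    (ha_lim : Tendsto a atTop (nhds 0)) :
    Tendsto (fun n => u n / b n) atTop (nhds 1) :=
  affine_recursion_equiv_general u a b hbdd hrec hb_pos hb_ratio ha_lim
end

section
/- Let (λ_n)_{n≥1} and (μ_n)_{n≥1} be positive sequences with λ_n/μ_n → l < 1 as n → ∞ and sup_{k,n≥1} μ_n/μ_{n+k} < ∞. Define π_n = (λ_1···λ_{n-1})/(μ_1···μ_n). Then the series ∑_{n≥1} (1/(λ_n π_n)) ∑_{i≥n+1} π_i converges if and only if ∑_{n≥1} 1/μ_n converges. -/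
/-!
Since `π (n+1) μ (n+1) = π n λ n` and `λ n ≤ r μ n` eventually for some `r < 1`, the
products `π n μ n` decay geometrically; with `μ n ≤ K μ (n+k)` this gives
`π (m+i) ≤ K rⁱ π m`, so every tail `∑_{i ≥ m} π i` lies between `π m` and
`K π m / (1 - r)`. The `n`-th term of the series is `(∑_{i ≥ n+2} π i) / (π (n+2) μ (n+2))`,
hence it is `Θ(1 / μ (n+2))`.
-/

open Filter Asymptotics

theorem summable_and_tsum_le_of_le_geometric {f : ℕ → ℝ} {c r : ℝ} (hf : ∀ i, 0 ≤ f i)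
    (hr₀ : 0 ≤ r) (hr₁ : r < 1) (h : ∀ i, f i ≤ c * r ^ i) :
    Summable f ∧ ∑' i, f i ≤ c / (1 - r) := by
  have hg := (summable_geometric_of_lt_one hr₀ hr₁).mul_left c
  have hs := hg.of_nonneg_of_le hf h
  refine ⟨hs, (hs.tsum_le_tsum h hg).trans_eq ?_⟩
  rw [tsum_mul_left, tsum_geometric_of_lt_one hr₀ hr₁, div_eq_mul_inv]

theorem exists_le_mul_add_of_div_le {mu : ℕ → ℝ} (hmu : ∀ n ≥ 1, 0 < mu n)
    (hgrowth : ∃ K : ℝ, ∀ n ≥ 1, ∀ k ≥ 1, mu n / mu (n + k) ≤ K) :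
    ∃ K : ℝ, ∀ n ≥ 1, ∀ k, mu n ≤ K * mu (n + k) := by
  obtain ⟨K, hK⟩ := hgrowth
  refine ⟨max K 1, fun n hn k => ?_⟩
  rw [← div_le_iff₀ (hmu (n + k) (by omega))]
  rcases Nat.eq_zero_or_pos k with rfl | hk
  · simp [div_self (hmu n hn).ne']
  · exact (hK n hn k hk).trans (le_max_left K 1)

theorem Asymptotics.isTheta_mul_left_of_eventually_mem_Icc {α : Type*} {l : Filter α}
    {R g : α → ℝ} {C : ℝ} (hR : ∀ᶠ x in l, R x ∈ Set.Icc 1 C) :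
    (fun x => R x * g x) =Θ[l] g := by
  refine ⟨IsBigO.of_bound C ?_, IsBigO.of_bound' ?_⟩ <;>
    filter_upwards [hR] with x ⟨h1, hC⟩ <;>
    rw [norm_mul, Real.norm_of_nonneg (zero_le_one.trans h1)]
  · exact mul_le_mul_of_nonneg_right hC (norm_nonneg _)
  · exact le_mul_of_one_le_left (norm_nonneg _) h1

section BirthDeath

variable {lam mu pi : ℕ → ℝ}

theorem mul_le_pow_mul_of_succ_mul_eq {r : ℝ} {m : ℕ} (hr : 0 ≤ r)
    (hrec : ∀ n ≥ m, pi (n + 1) * mu (n + 1) = pi n * lam n)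
    (hpi : ∀ n ≥ m, 0 ≤ pi n) (hlam : ∀ n ≥ m, lam n ≤ r * mu n) (i : ℕ) :
    pi (m + i) * mu (m + i) ≤ r ^ i * (pi m * mu m) := by
  induction i with
  | zero => simp
  | succ i ih =>
    calc pi (m + (i + 1)) * mu (m + (i + 1)) = pi (m + i) * lam (m + i) := hrec (m + i) (by omega)
      _ ≤ pi (m + i) * (r * mu (m + i)) :=
          mul_le_mul_of_nonneg_left (hlam _ (by omega)) (hpi _ (by omega))
      _ = r * (pi (m + i) * mu (m + i)) := by ring
      _ ≤ r * (r ^ i * (pi m * mu m)) := mul_le_mul_of_nonneg_left ih hr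
      _ = r ^ (i + 1) * (pi m * mu m) := by ring

theorem succ_mul_eq_of_eq_prod_div_prod
    (hpi : ∀ n ≥ 1, pi n = (∏ i ∈ Finset.Ico 1 n, lam i) / ∏ i ∈ Finset.Icc 1 n, mu i)
    {n : ℕ} (hn : 1 ≤ n) (hmu : mu (n + 1) ≠ 0) :
    pi (n + 1) * mu (n + 1) = pi n * lam n := by
  rw [hpi (n + 1) (by omega), hpi n hn, Finset.prod_Ico_succ_top hn,
    Finset.prod_Icc_succ_top (by omega)]
  field_simp

theorem pos_of_eq_prod_div_prod
    (hpi : ∀ n ≥ 1, pi n = (∏ i ∈ Finset.Ico 1 n, lam i) / ∏ i ∈ Finset.Icc 1 n, mu i)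
    (hlam : ∀ n ≥ 1, 0 < lam n) (hmu : ∀ n ≥ 1, 0 < mu n) : ∀ n ≥ 1, 0 < pi n := by
  intro n hn
  rw [hpi n hn]
  exact div_pos (Finset.prod_pos fun i hi => hlam i (Finset.mem_Ico.1 hi).1)
    (Finset.prod_pos fun i hi => hmu i (Finset.mem_Icc.1 hi).1)

theorem exists_eventually_tsum_tail_le {l : ℝ}
    (hlam_pos : ∀ n ≥ 1, 0 < lam n) (hmu_pos : ∀ n ≥ 1, 0 < mu n)
    (hlim : Tendsto (fun n => lam n / mu n) atTop (nhds l)) (hl : l < 1)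
    (hgrowth : ∃ K : ℝ, ∀ n ≥ 1, ∀ k ≥ 1, mu n / mu (n + k) ≤ K)
    (hpi : ∀ n ≥ 1, pi n = (∏ i ∈ Finset.Ico 1 n, lam i) / ∏ i ∈ Finset.Icc 1 n, mu i) :
    ∃ C, ∀ᶠ m in atTop, pi m ≤ ∑' i, pi (m + i) ∧ ∑' i, pi (m + i) ≤ C * pi m := by
  obtain ⟨r, hlr, hr₁⟩ := exists_between (max_lt hl one_pos)
  have hr₀ : 0 ≤ r := (le_max_right l 0).trans hlr.le
  obtain ⟨K, hK⟩ := exists_le_mul_add_of_div_le hmu_pos hgrowth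
  have hpi_pos := pos_of_eq_prod_div_prod hpi hlam_pos hmu_pos
  obtain ⟨N, hN⟩ := eventually_atTop.1 <|
    (hlim.eventually (gt_mem_nhds ((le_max_left l 0).trans_lt hlr))).and (eventually_ge_atTop 1)
  refine ⟨K / (1 - r), eventually_atTop.2 ⟨N, fun m hm => ?_⟩⟩
  have hm₁ : 1 ≤ m := (hN m hm).2
  have hdecay := mul_le_pow_mul_of_succ_mul_eq (m := m) hr₀
    (fun n hn => succ_mul_eq_of_eq_prod_div_prod hpi (by omega) (hmu_pos _ (by omega)).ne')
    (fun n hn => (hpi_pos _ (by omega)).le)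
    (fun n hn => ((div_lt_iff₀ (hmu_pos n (by omega))).1 (hN n (by omega)).1).le)
  have hgeom : ∀ i, pi (m + i) ≤ K * pi m * r ^ i := fun i => by
    refine le_of_mul_le_mul_right ?_ (hmu_pos (m + i) (by omega))
    calc pi (m + i) * mu (m + i) ≤ r ^ i * pi m * mu m := by linarith [hdecay i]
      _ ≤ r ^ i * pi m * (K * mu (m + i)) :=
          mul_le_mul_of_nonneg_left (hK m hm₁ i) (by have := hpi_pos m hm₁; positivity)
      _ = K * pi m * r ^ i * mu (m + i) := by ring
  obtain ⟨hs, hle⟩ := summable_and_tsum_le_of_le_geometric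
    (fun i => (hpi_pos _ (by omega)).le) hr₀ hr₁ hgeom
  refine ⟨?_, hle.trans_eq (mul_div_right_comm _ _ _)⟩
  simpa using hs.le_tsum 0 fun i _ => (hpi_pos _ (by omega)).le

end BirthDeath

theorem series_S_convergence_iff_inverse_mu_summable
    (lam mu : ℕ → ℝ) (l : ℝ) (pi : ℕ → ℝ)
    (hlam_pos : ∀ n ≥ 1, 0 < lam n)
    (hmu_pos : ∀ n ≥ 1, 0 < mu n)
    (hlim : Tendsto (fun n => lam n / mu n) atTop (nhds l))
    (hl : l < 1)
    (hgrowth : ∃ K : ℝ, ∀ n ≥ 1, ∀ k ≥ 1, mu n / mu (n + k) ≤ K)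
    (hpi : ∀ n ≥ 1, pi n = (∏ i ∈ Finset.Ico 1 n, lam i) / ∏ i ∈ Finset.Icc 1 n, mu i) :
    Summable (fun n : ℕ =>
        (1 / (lam (n + 1) * pi (n + 1))) * ∑' i : ℕ, pi (n + 2 + i)) ↔
      Summable (fun n : ℕ => 1 / mu (n + 1)) := by
  obtain ⟨C, hC⟩ := exists_eventually_tsum_tail_le hlam_pos hmu_pos hlim hl hgrowth hpi
  have hterm : ∀ n : ℕ, (1 / (lam (n + 1) * pi (n + 1))) * ∑' i : ℕ, pi (n + 2 + i)
      = (∑' i : ℕ, pi (n + 2 + i)) / pi (n + 2) * (1 / mu (n + 2)) := fun n => by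
    rw [mul_comm (lam _),
      ← succ_mul_eq_of_eq_prod_div_prod hpi (by omega) (hmu_pos _ (by omega)).ne']
    ring
  have hTheta : (fun n : ℕ => (1 / (lam (n + 1) * pi (n + 1))) * ∑' i : ℕ, pi (n + 2 + i))
      =Θ[atTop] fun n => 1 / mu (n + 2) := by
    simp_rw [hterm]
    refine isTheta_mul_left_of_eventually_mem_Icc (C := C) ?_
    filter_upwards [(tendsto_add_atTop_nat 2).eventually hC] with n ⟨hlow, hupp⟩
    have hp := pos_of_eq_prod_div_prod hpi hlam_pos hmu_pos (n + 2) (by omega)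
    exact ⟨(one_le_div hp).2 hlow, (div_le_iff₀ hp).2 hupp⟩
  rw [hTheta.summable_iff_nat]
  exact summable_nat_add_iff 1 (f := fun n => 1 / mu (n + 1))
end

section
/- Let (λ_n), (μ_n) be positive sequences with λ_n/μ_n → l < 1 and sup_{k,n≥1} μ_n/μ_{n+k} < ∞, and define A_n = ∑_{j≥1} (λ_{n+1}···λ_{n+j-1})/(μ_{n+1}···μ_{n+j}). Then there exist constants 0 < c ≤ C and N such that for all n ≥ N, c/μ_{n+1} ≤ A_n ≤ C/μ_{n+1}. -/
/-!
Eventually every ratio `λ_i / μ_i` lies below some `r < 1`, and the growth condition gives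
`1 / μ_{n+1+j} ≤ K / μ_{n+1}` for all `j`. Hence the `j`-th term of `A_n` is at most
`r ^ j · K / μ_{n+1}`, and a geometric majorant bounds `A_n` by `K / ((1 - r) μ_{n+1})`.
The terms are nonnegative, so `A_n` dominates its first term `1 / μ_{n+1}`.
-/

open Filter Finset

lemma prod_range_le_pow {g : ℕ → ℝ} {r : ℝ} {j : ℕ} (h0 : ∀ i < j, 0 ≤ g i)
    (hr : ∀ i < j, g i ≤ r) : ∏ i ∈ range j, g i ≤ r ^ j := by
  simpa using prod_le_prod (fun i hi => h0 i (mem_range.1 hi)) (fun i hi => hr i (mem_range.1 hi))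

lemma summable_and_tsum_le_of_le_geometric_s5 {f : ℕ → ℝ} {a r : ℝ} (hf : ∀ j, 0 ≤ f j)
    (hr0 : 0 ≤ r) (hr1 : r < 1) (hle : ∀ j, f j ≤ a * r ^ j) :
    Summable f ∧ ∑' j, f j ≤ a / (1 - r) := by
  have hg : HasSum (fun j => a * r ^ j) (a / (1 - r)) :=
    (hasSum_geometric_of_lt_one hr0 hr1).mul_left a
  have hs : Summable f := .of_nonneg_of_le hf hle hg.summable
  exact ⟨hs, hasSum_le hle hs.hasSum hg⟩

lemma one_div_le_max_div_of_ratio_le {mu : ℕ → ℝ} {K : ℝ} (hmu_pos : ∀ n ≥ 1, 0 < mu n)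
    (hK : ∀ n ≥ 1, ∀ k ≥ 1, mu n / mu (n + k) ≤ K) {m : ℕ} (hm : 1 ≤ m) (j : ℕ) :
    1 / mu (m + j) ≤ max K 1 / mu m := by
  have hmj : 0 < mu (m + j) := hmu_pos _ (by omega)
  rw [div_le_div_iff₀ hmj (hmu_pos m hm), one_mul]
  rcases Nat.eq_zero_or_pos j with rfl | hj
  · exact le_mul_of_one_le_left hmj.le (le_max_right _ _)
  · calc mu m ≤ K * mu (m + j) := (div_le_iff₀ hmj).1 (hK m hm j hj)
      _ ≤ max K 1 * mu (m + j) := by gcongr; exact le_max_left _ _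

/-- The `j`-th term of the series `A_{m-1}`; the paper's summation index is `j + 1`. -/
noncomputable def seriesTerm (lam mu : ℕ → ℝ) (m j : ℕ) : ℝ :=
  (∏ i ∈ range j, lam (m + i) / mu (m + i)) * (1 / mu (m + j))

section seriesTerm

variable {lam mu : ℕ → ℝ} {m : ℕ}

lemma seriesTerm_nonneg (hlam : ∀ i ≥ m, 0 ≤ lam i) (hmu : ∀ i ≥ m, 0 < mu i) (j : ℕ) :
    0 ≤ seriesTerm lam mu m j :=
  mul_nonneg (prod_nonneg fun i _ => div_nonneg (hlam _ (by omega)) (hmu _ (by omega)).le)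
    (one_div_nonneg.2 (hmu _ (by omega)).le)

lemma seriesTerm_le_geometric {r K : ℝ} (hr0 : 0 ≤ r) (hlam : ∀ i ≥ m, 0 ≤ lam i) (hmu : ∀ i ≥ m, 0 < mu i)
    (hratio : ∀ i ≥ m, lam i / mu i ≤ r) (hK : ∀ j, 1 / mu (m + j) ≤ K / mu m) (j : ℕ) :
    seriesTerm lam mu m j ≤ K / mu m * r ^ j := by
  have hprod : ∏ i ∈ range j, lam (m + i) / mu (m + i) ≤ r ^ j :=
    prod_range_le_pow (fun i _ => div_nonneg (hlam _ (by omega)) (hmu _ (by omega)).le)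
      (fun i _ => hratio _ (by omega))
  rw [seriesTerm, mul_comm (K / mu m)]
  exact mul_le_mul hprod (hK j) (one_div_nonneg.2 (hmu _ (by omega)).le) (pow_nonneg hr0 j)

lemma tsum_seriesTerm_mem_Icc {r K : ℝ} (hr0 : 0 ≤ r) (hr1 : r < 1) (hlam : ∀ i ≥ m, 0 ≤ lam i)
    (hmu : ∀ i ≥ m, 0 < mu i) (hratio : ∀ i ≥ m, lam i / mu i ≤ r)
    (hK : ∀ j, 1 / mu (m + j) ≤ K / mu m) :
    ∑' j, seriesTerm lam mu m j ∈ Set.Icc (1 / mu m) (K / mu m / (1 - r)) := by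
  obtain ⟨hs, hle⟩ := summable_and_tsum_le_of_le_geometric_s5 (seriesTerm_nonneg hlam hmu) hr0 hr1
    (seriesTerm_le_geometric hr0 hlam hmu hratio hK)
  refine ⟨?_, hle⟩
  simpa [seriesTerm] using hs.le_tsum 0 fun j _ => seriesTerm_nonneg hlam hmu j

end seriesTerm

theorem A_n_comparable_to_inverse_mu
    (lam mu : ℕ → ℝ) (l : ℝ)
    (hlam_pos : ∀ n ≥ 1, 0 < lam n)
    (hmu_pos : ∀ n ≥ 1, 0 < mu n)
    (hlim : Tendsto (fun n => lam n / mu n) atTop (nhds l))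
    (hl : l < 1)
    (hgrowth : ∃ K : ℝ, ∀ n ≥ 1, ∀ k ≥ 1, mu n / mu (n + k) ≤ K) :
    ∃ c C : ℝ, 0 < c ∧ c ≤ C ∧ ∃ N : ℕ, ∀ n ≥ N,
      c / mu (n + 1) ≤
        (∑' j : ℕ, (∏ i ∈ Finset.range j, lam (n + 1 + i) / mu (n + 1 + i)) *
            (1 / mu (n + 1 + j))) ∧
      (∑' j : ℕ, (∏ i ∈ Finset.range j, lam (n + 1 + i) / mu (n + 1 + i)) *
          (1 / mu (n + 1 + j))) ≤ C / mu (n + 1) := by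
  obtain ⟨K, hK⟩ := hgrowth
  obtain ⟨r, hlr, hr1⟩ := exists_between hl
  obtain ⟨N, hN⟩ := eventually_atTop.1 (hlim.eventually_lt_const hlr)
  have hr0 : 0 ≤ r :=
    (div_nonneg (hlam_pos (N + 1) (by omega)).le (hmu_pos (N + 1) (by omega)).le).trans
      (hN (N + 1) (by omega)).le
  have hC : 1 ≤ max K 1 / (1 - r) := by
    rw [le_div_iff₀ (by linarith), one_mul]
    linarith [le_max_right K 1]
  refine ⟨1, max K 1 / (1 - r), one_pos, hC, N, fun n hn => ?_⟩
  rw [div_right_comm]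
  exact tsum_seriesTerm_mem_Icc hr0 hr1 (fun i hi => (hlam_pos i (by omega)).le)
    (fun i hi => hmu_pos i (by omega)) (fun i hi => (hN i (by omega)).le)
    (one_div_le_max_div_of_ratio_le hmu_pos hK (by omega))
end

section
/- Let (m_n) be a positive sequence with ∑_n m_n < ∞, set S_n = ∑_{k≥n} m_k, and suppose m_n/S_n → 0 as n → ∞. Then for every A > 0 there exists n_0 such that for all n ≥ n_0, S_n² ≥ 2A ∑_{k≥n} m_k². -/
/-! Eventually `m k ≤ S k / (2A)`, and `S` is antitone, so every term of the tail from `n` on is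
at most `S n / (2A)`; hence `∑_{k ≥ n} m k ² ≤ (S n / (2A)) · ∑_{k ≥ n} m k = S n ² / (2A)`. -/

open Filter

section TailSums

variable {f : ℕ → ℝ}

lemma Summable.tsum_nat_add_eq_add_tsum_succ (hf : Summable f) (n : ℕ) :
    ∑' k, f (n + k) = f n + ∑' k, f (n + 1 + k) := by
  have hs : Summable fun k => f (n + k) := hf.comp_injective (add_right_injective n)
  rw [hs.tsum_eq_zero_add]
  simp only [add_zero, add_assoc, add_comm 1]

lemma antitone_tsum_nat_add (hf0 : ∀ k, 0 ≤ f k) (hf : Summable f) :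
    Antitone fun n => ∑' k, f (n + k) :=
  antitone_nat_of_succ_le fun n => by
    rw [hf.tsum_nat_add_eq_add_tsum_succ n]
    linarith [hf0 n]

lemma tsum_sq_le_mul_tsum {c : ℝ} (hf0 : ∀ k, 0 ≤ f k) (hf : Summable f)
    (hle : ∀ k, f k ≤ c) : ∑' k, f k ^ 2 ≤ c * ∑' k, f k := by
  have hsq : ∀ k, f k ^ 2 ≤ c * f k := fun k => by
    rw [sq]; exact mul_le_mul_of_nonneg_right (hle k) (hf0 k)
  rw [← tsum_mul_left]
  have hsq_summable : Summable fun k => f k ^ 2 :=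
    (hf.mul_left c).of_nonneg_of_le (fun k => sq_nonneg _) hsq
  exact hsq_summable.tsum_le_tsum hsq (hf.mul_left c)

end TailSums

theorem tail_sum_square_bound
    (m : ℕ → ℝ) (hm_pos : ∀ n, 0 < m n) (hm_sum : Summable m)
    (hratio : Tendsto (fun n => m n / ∑' k : ℕ, m (n + k)) atTop (nhds 0)) :
    ∀ A > (0:ℝ), ∃ n₀ : ℕ, ∀ n ≥ n₀,
      2 * A * ∑' k : ℕ, (m (n + k)) ^ 2 ≤ (∑' k : ℕ, m (n + k)) ^ 2 := by
  intro A hA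
  set S : ℕ → ℝ := fun n => ∑' k, m (n + k)
  have hm0 : ∀ n, 0 ≤ m n := fun n => (hm_pos n).le
  have hS_pos : ∀ n, 0 < S n := fun n =>
    (hm_sum.comp_injective (add_right_injective n)).tsum_pos (fun k => hm0 _) 0 (hm_pos _)
  have hε : (0 : ℝ) < (2 * A)⁻¹ := by positivity
  obtain ⟨n₀, hn₀⟩ := eventually_atTop.1 (hratio.eventually (gt_mem_nhds hε))
  refine ⟨n₀, fun n hn => ?_⟩
  have hle : ∀ k, m (n + k) ≤ (2 * A)⁻¹ * S n := fun k =>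
    calc m (n + k) ≤ (2 * A)⁻¹ * S (n + k) :=
          ((div_lt_iff₀ (hS_pos _)).1 (hn₀ _ (by omega))).le
      _ ≤ (2 * A)⁻¹ * S n :=
          mul_le_mul_of_nonneg_left (antitone_tsum_nat_add hm0 hm_sum (by omega)) hε.le
  calc 2 * A * ∑' k, m (n + k) ^ 2 ≤ 2 * A * ((2 * A)⁻¹ * S n * S n) := by
        gcongr
        exact tsum_sq_le_mul_tsum (fun k => hm0 _)
          (hm_sum.comp_injective (add_right_injective n)) hle
    _ = S n ^ 2 := by field_simp
end

section
/- Let (m_n) be a positive summable sequence with tail sums S_n = ∑_{k≥n} m_k and m_n/S_n → α ∈ (0,1]. Then there exist n_0, C > 0 and β ∈ (0,1) such that m_{n+k}/S_n ≤ C β^k for all n ≥ n_0 and k ≥ 0. -/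
/-!
Once `m n / S n > α / 2`, the recursion `S n = m n + S (n + 1)` gives
`S (n + 1) ≤ (1 - α / 2) S n`, so the tails decay geometrically from `n` on, and
`m (n + k) ≤ S (n + k) ≤ (1 - α / 2) ^ k S n`.
-/

open Filter

noncomputable def tailSum (m : ℕ → ℝ) (n : ℕ) : ℝ :=
  ∑' k, m (n + k)

section TailSum

variable {m : ℕ → ℝ}

theorem Summable.tailSum_eq_add_tailSum_succ (hm : Summable m) (n : ℕ) :
    tailSum m n = m n + tailSum m (n + 1) := by
  have hshift : Summable fun k => m (n + k) := hm.comp_injective (add_right_injective n)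
  simpa only [tailSum, add_zero, add_assoc, add_comm 1] using hshift.tsum_eq_zero_add

theorem Summable.le_tailSum (hm : Summable m) (hnonneg : ∀ k, 0 ≤ m k) (n : ℕ) :
    m n ≤ tailSum m n :=
  (hm.comp_injective (add_right_injective n)).le_tsum 0 (fun k _ => hnonneg (n + k))

theorem Summable.tailSum_pos (hm : Summable m) (hnonneg : ∀ k, 0 ≤ m k) {n : ℕ}
    (hn : 0 < m n) : 0 < tailSum m n :=
  hn.trans_le (hm.le_tailSum hnonneg n)

theorem Summable.tailSum_succ_le_of_mul_le (hm : Summable m) {c : ℝ} {n : ℕ}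
    (h : c * tailSum m n ≤ m n) : tailSum m (n + 1) ≤ (1 - c) * tailSum m n := by
  linarith [hm.tailSum_eq_add_tailSum_succ n]

end TailSum

theorem geometric_domination_of_tail_terms
    (m : ℕ → ℝ) (α : ℝ) (hα0 : 0 < α) (hα1 : α ≤ 1)
    (hm_pos : ∀ n, 0 < m n) (hm_sum : Summable m)
    (hratio : Tendsto (fun n => m n / ∑' k : ℕ, m (n + k)) atTop (nhds α)) :
    ∃ n₀ : ℕ, ∃ C > (0:ℝ), ∃ β : ℝ, 0 < β ∧ β < 1 ∧
      ∀ n ≥ n₀, ∀ k : ℕ, m (n + k) / (∑' j : ℕ, m (n + j)) ≤ C * β ^ k := by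
  have hnonneg : ∀ n, 0 ≤ m n := fun n => (hm_pos n).le
  have hS_pos : ∀ n, 0 < tailSum m n := fun n => hm_sum.tailSum_pos hnonneg (hm_pos n)
  obtain ⟨n₀, hn₀⟩ := eventually_atTop.mp
    (hratio.eventually (eventually_gt_nhds (half_lt_self hα0)))
  refine ⟨n₀, 1, one_pos, 1 - α / 2, by linarith, by linarith, fun n hn k => ?_⟩
  have hstep : ∀ i, tailSum m (n + i + 1) ≤ (1 - α / 2) * tailSum m (n + i) := fun i =>
    hm_sum.tailSum_succ_le_of_mul_le
      ((lt_div_iff₀ (hS_pos (n + i))).mp (hn₀ (n + i) (by omega))).le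
  have hgeom : tailSum m (n + k) ≤ (1 - α / 2) ^ k * tailSum m n :=
    le_geom (u := fun i => tailSum m (n + i)) (by linarith) k (fun i _ => hstep i)
  rw [one_mul]
  change m (n + k) / tailSum m n ≤ _
  rw [div_le_iff₀ (hS_pos n)]
  exact (hm_sum.le_tailSum hnonneg (n + k)).trans hgeom
end
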